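/- arXiv:2211.04731 — 4 statements merged into one kernel-verified Lean document; each statement's English description precedes it below -/
import Mathlib

section
/- Let s₀ > 0, h ∈ C¹, and suppose v ∈ C²([0,ℓ]) satisfies v''(x) + s₀² h(s₀x) v(x) = 0 on [0,ℓ] with v(0) = v(ℓ) = 0. Then ∫₀^ℓ [2h(s₀x) + s₀x h'(s₀x)] v(x)² dx = (ℓ/s₀²) v'(ℓ)². -/
open intervalIntegral

/-! Along a solution of `v'' = -s² h(s x) v`, the Pohozaev functional
`x v'²/s² + x v² h(s x) - v v'/s²` has derivative `(2 h(s x) + s x h'(s x)) v²`, so the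
integral is its increment over `[0, ℓ]`; since `v(0) = v(ℓ) = 0` that increment is `ℓ v'(ℓ)²/s²`. -/

noncomputable def pohozaevFunctional (s : ℝ) (h v v' : ℝ → ℝ) (x : ℝ) : ℝ :=
  x / s ^ 2 * v' x ^ 2 + x * v x ^ 2 * h (s * x) - 1 / s ^ 2 * (v x * v' x)

theorem hasDerivAt_pohozaevFunctional {s x dh : ℝ} {h v v' : ℝ → ℝ} (hs : s ≠ 0)
    (hh : HasDerivAt h dh (s * x)) (hv : HasDerivAt v (v' x) x)
    (hv' : HasDerivAt v' (-(s ^ 2 * h (s * x) * v x)) x) :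
    HasDerivAt (pohozaevFunctional s h v v')
      ((2 * h (s * x) + s * x * dh) * v x ^ 2) x := by
  have hhs : HasDerivAt (fun y => h (s * y)) (dh * s) x :=
    hh.comp x (hasDerivAt_const_mul s)
  refine (((((hasDerivAt_id x).div_const (s ^ 2)).mul (hv'.pow 2)).add
    (((hasDerivAt_id x).mul (hv.pow 2)).mul hhs)).sub
    ((hv.mul hv').const_mul (1 / s ^ 2))).congr_deriv ?_
  simp only [Pi.pow_apply, Pi.mul_apply, id]
  field_simp
  ring

theorem stmt2_general (ℓ s₀ : ℝ) (hs : 0 < s₀) (hℓ : 0 ≤ ℓ)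
    (h h' v v' v'' : ℝ → ℝ)
    (hh : ∀ x, HasDerivAt h (h' x) x)
    (hh' : Continuous h')
    (hv : ∀ x, HasDerivAt v (v' x) x)
    (hv' : ∀ x, HasDerivAt v' (v'' x) x)
    (hode : ∀ x ∈ Set.Icc (0:ℝ) ℓ, v'' x + s₀^2 * h (s₀ * x) * v x = 0)
    (hv0 : v 0 = 0) (hvℓ : v ℓ = 0) :
    ∫ x in (0:ℝ)..ℓ, (2 * h (s₀ * x) + s₀ * x * h' (s₀ * x)) * (v x)^2
      = (ℓ / s₀^2) * (v' ℓ)^2 := by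
  have hderiv : ∀ x ∈ Set.uIcc 0 ℓ, HasDerivAt (pohozaevFunctional s₀ h v v')
      ((2 * h (s₀ * x) + s₀ * x * h' (s₀ * x)) * v x ^ 2) x := by
    intro x hx
    rw [Set.uIcc_of_le hℓ] at hx
    exact hasDerivAt_pohozaevFunctional hs.ne' (hh _) (hv x)
      ((hv' x).congr_deriv (by linarith [hode x hx]))
  have hch : Continuous h := continuous_iff_continuousAt.2 fun x => (hh x).continuousAt
  have hcv : Continuous v := continuous_iff_continuousAt.2 fun x => (hv x).continuousAt
  have hint : IntervalIntegrable
      (fun x => (2 * h (s₀ * x) + s₀ * x * h' (s₀ * x)) * v x ^ 2) MeasureTheory.volume 0 ℓ :=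
    (by fun_prop : Continuous _).intervalIntegrable 0 ℓ
  rw [integral_eq_sub_of_hasDerivAt hderiv hint]
  simp [pohozaevFunctional, hv0, hvℓ]

/-- If `v'' + s₀² h(s₀x) v = 0` on `[0,ℓ]` with `v(0) = v(ℓ) = 0`,
then `∫₀^ℓ [2h(s₀x) + s₀ x h'(s₀x)] v² dx = (ℓ/s₀²) v'(ℓ)²`. -/
theorem stmt2 (ℓ s₀ : ℝ) (hs : 0 < s₀) (hℓ : 0 ≤ ℓ)
    (h h' v v' v'' : ℝ → ℝ)
    (hh : ∀ x, HasDerivAt h (h' x) x)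
    (hh' : Continuous h')
    (hv : ∀ x, HasDerivAt v (v' x) x)
    (hv' : ∀ x, HasDerivAt v' (v'' x) x)
    (hv'' : Continuous v'')
    (hode : ∀ x ∈ Set.Icc (0:ℝ) ℓ, v'' x + s₀^2 * h (s₀ * x) * v x = 0)
    (hv0 : v 0 = 0) (hvℓ : v ℓ = 0) :
    ∫ x in (0:ℝ)..ℓ, (2 * h (s₀ * x) + s₀ * x * h' (s₀ * x)) * (v x)^2
      = (ℓ / s₀^2) * (v' ℓ)^2 :=
  stmt2_general ℓ s₀ hs hℓ h h' v v' v'' hh hh' hv hv' hode hv0 hvℓ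
end

section
/- Let Δ : ℝ → ℝ be a smooth function with Taylor expansion Δ(λ) = αλ⁴ + O(λ⁵) as λ → 0, where α > 0. Then δ(λ) := √(Δ(λ)) is C² in a neighbourhood of λ = 0, with δ(0) = 0, δ'(0) = 0, and δ''(0) = 2√α. -/
open Real Filter Set Topology ContDiff

private lemma slope_tendsto0 {f : ℝ → ℝ} (hf : DifferentiableAt ℝ f 0) (h0 : f 0 = 0) :
    Tendsto (fun x => f x / x) (𝓝[≠] (0:ℝ)) (𝓝 (deriv f 0)) := by
  have h := hf.hasDerivAt
  rw [hasDerivAt_iff_tendsto_slope] at h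
  exact h.congr (fun x => by simp [slope_def_field, h0])

private lemma lhop_pow {f : ℝ → ℝ} (n : ℕ) (hf : ContDiff ℝ (∞ : WithTop ℕ∞) f) (h0 : f 0 = 0)
    {c : ℝ} (h : Tendsto (fun x => deriv f x / x ^ n) (𝓝[≠] (0:ℝ)) (𝓝 (((n:ℝ)+1) * c))) :
    Tendsto (fun x => f x / x ^ (n+1)) (𝓝[≠] (0:ℝ)) (𝓝 c) := by
  have hd : Differentiable ℝ f := hf.differentiable (by norm_num)
  apply HasDerivAt.lhopital_zero_nhdsNE (f' := deriv f) (g' := fun x => ((n:ℝ)+1) * x ^ n)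
  · exact Eventually.of_forall fun x => (hd x).hasDerivAt
  · exact Eventually.of_forall fun x => by simpa using hasDerivAt_pow (n+1) x
  · filter_upwards [self_mem_nhdsWithin] with x hx
    exact mul_ne_zero (by positivity) (pow_ne_zero _ hx)
  · have := hf.continuous.tendsto 0
    rw [h0] at this
    exact this.mono_left nhdsWithin_le_nhds
  · have := (continuous_pow (n+1)).tendsto (0:ℝ)
    simpa using this.mono_left nhdsWithin_le_nhds
  · have h2 := h.div_const ((n:ℝ)+1)
    have hc : ((n:ℝ)+1) * c / ((n:ℝ)+1) = c := by field_simp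
    rw [hc] at h2
    exact h2.congr (fun x => by rw [div_div, mul_comm])

/-- If `Δ` is smooth with `Δ(λ) = αλ⁴ + O(λ⁵)` at `0` (i.e.
`Δ(0) = Δ'(0) = Δ''(0) = Δ'''(0) = 0` and `Δ''''(0) = 24α`) with `α > 0`,
then `δ = √Δ` is `C²` near `0`, with `δ(0) = 0`, `δ'(0) = 0`, `δ''(0) = 2√α`. -/
theorem stmt6 (Δ : ℝ → ℝ) (α : ℝ) (hα : 0 < α)
    (hΔ : ContDiff ℝ (⊤ : ℕ∞) Δ)
    (h0 : Δ 0 = 0) (h1 : deriv Δ 0 = 0)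
    (h2 : iteratedDeriv 2 Δ 0 = 0) (h3 : iteratedDeriv 3 Δ 0 = 0)
    (h4 : iteratedDeriv 4 Δ 0 = 24 * α) :
    ∃ ε > (0:ℝ), ContDiffOn ℝ 2 (fun x => Real.sqrt (Δ x)) (Set.Ioo (-ε) ε) ∧
      Real.sqrt (Δ 0) = 0 ∧
      deriv (fun x => Real.sqrt (Δ x)) 0 = 0 ∧
      deriv (deriv (fun x => Real.sqrt (Δ x))) 0 = 2 * Real.sqrt α := by
  obtain ⟨s, hs, rfl⟩ : ∃ t : ℝ, 0 < t ∧ α = t^2 :=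
    ⟨Real.sqrt α, Real.sqrt_pos.2 hα, (Real.sq_sqrt hα.le).symm⟩
  have hsqs : Real.sqrt (s^2) = s := Real.sqrt_sq hs.le
  rw [hsqs]
  have hΔ' : ContDiff ℝ (∞ : WithTop ℕ∞) Δ := hΔ.of_le (by simp)
  have hdk : ∀ n, ContDiff ℝ (∞ : WithTop ℕ∞) (iteratedDeriv n Δ) := fun n => by
    rw [iteratedDeriv_eq_iterate]; exact hΔ'.iterate_deriv n
  have hder : ∀ n, deriv (iteratedDeriv n Δ) = iteratedDeriv (n+1) Δ := fun n =>
    (iteratedDeriv_succ).symm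
  have hcd1 : Continuous (deriv Δ) := by
    rw [← iteratedDeriv_one]; exact (hdk 1).continuous
  -- limits
  have T3 : Tendsto (fun x => iteratedDeriv 3 Δ x / x) (𝓝[≠] (0:ℝ)) (𝓝 (24*s^2)) := by
    have := slope_tendsto0 (((hdk 3).differentiable (by norm_num)) 0) h3
    rwa [hder 3, h4] at this
  have T2 : Tendsto (fun x => iteratedDeriv 2 Δ x / x ^ 2) (𝓝[≠] (0:ℝ)) (𝓝 (12*s^2)) := by
    refine lhop_pow 1 (hdk 2) h2 ?_
    rw [hder 2]
    convert T3 using 2 with x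
    · rw [pow_one]
    · ring
  have T1 : Tendsto (fun x => deriv Δ x / x ^ 3) (𝓝[≠] (0:ℝ)) (𝓝 (4*s^2)) := by
    have := lhop_pow 2 (hdk 1) (by rw [iteratedDeriv_one]; exact h1) (c := 4*s^2) ?_
    · rwa [iteratedDeriv_one] at this
    · rw [hder 1]; convert T2 using 2; ring
  have T0 : Tendsto (fun x => Δ x / x ^ 4) (𝓝[≠] (0:ℝ)) (𝓝 (s^2)) := by
    have := lhop_pow 3 hΔ' h0 (c := s^2) ?_
    · exact this
    · convert T1 using 2; ring
  -- sqrt facts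
  have hp4 : ∀ x : ℝ, x ≠ 0 → (0:ℝ) < x^4 := fun x hx =>
    lt_of_le_of_ne (by positivity) (Ne.symm (pow_ne_zero 4 hx))
  have hsqrt_eq : ∀ x : ℝ, x ≠ 0 → Real.sqrt (Δ x) = x^2 * Real.sqrt (Δ x / x^4) := by
    intro x hx
    have h4 : Real.sqrt (x^4) = x^2 := by
      rw [show x^4 = (x^2)^2 by ring, Real.sqrt_sq (by positivity)]
    rw [← h4, ← Real.sqrt_mul (hp4 x hx).le]
    congr 1
    field_simp
  have hq : Tendsto (fun x => Real.sqrt (Δ x / x^4)) (𝓝[≠] (0:ℝ)) (𝓝 s) := by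
    have := (Real.continuous_sqrt.continuousAt.tendsto (x := s^2)).comp T0
    rwa [Function.comp_def, hsqs] at this
  -- positivity near 0
  have hposev : ∀ᶠ x in 𝓝[≠] (0:ℝ), 0 < Δ x := by
    filter_upwards [T0.eventually (eventually_gt_nhds (by positivity : (0:ℝ) < s^2)),
      self_mem_nhdsWithin] with x hx hx0
    have : Δ x = (Δ x / x^4) * x^4 := (div_mul_cancel₀ _ (pow_ne_zero 4 hx0)).symm
    rw [this]; exact mul_pos hx (hp4 x hx0)
  obtain ⟨ε, hε, hball⟩ := Metric.mem_nhdsWithin_iff.mp hposev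
  have hpos' : ∀ x ∈ Set.Ioo (-ε) ε, x ≠ 0 → 0 < Δ x := by
    intro x hx hx0
    apply hball
    refine ⟨?_, hx0⟩
    rw [Real.ball_eq_Ioo]
    simpa using hx
  have h0I : (0:ℝ) ∈ Set.Ioo (-ε) ε := ⟨neg_lt_zero.2 hε, hε⟩
  -- the derivative candidates
  set S1 : ℝ → ℝ := fun x => if x = 0 then 0 else deriv Δ x / (2 * Real.sqrt (Δ x)) with hS1def
  set S2 : ℝ → ℝ := fun x => if x = 0 then 2 * s else
      iteratedDeriv 2 Δ x / (2 * Real.sqrt (Δ x)) -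
        (deriv Δ x)^2 / (4 * Δ x * Real.sqrt (Δ x)) with hS2def
  -- first derivative
  have hS1 : ∀ x ∈ Set.Ioo (-ε) ε, HasDerivAt (fun y => Real.sqrt (Δ y)) (S1 x) x := by
    intro x hx
    rcases eq_or_ne x 0 with rfl | hne
    · have : S1 0 = 0 := by simp [hS1def]
      rw [this, hasDerivAt_iff_tendsto_slope]
      have heq : ∀ᶠ y in 𝓝[≠] (0:ℝ),
          y * Real.sqrt (Δ y / y^4) = slope (fun y => Real.sqrt (Δ y)) 0 y := by
        filter_upwards [self_mem_nhdsWithin] with y hy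
        have hy' : y ≠ 0 := hy
        rw [slope_def_field, h0, Real.sqrt_zero, sub_zero, sub_zero, hsqrt_eq y hy']
        generalize Real.sqrt (Δ y / y^4) = q
        field_simp
      have hlim : Tendsto (fun y : ℝ => y * Real.sqrt (Δ y / y^4)) (𝓝[≠] (0:ℝ))
          (𝓝 (0 * s)) := (tendsto_id.mono_right nhdsWithin_le_nhds).mul hq
      rw [zero_mul] at hlim
      exact hlim.congr' heq
    · have hΔx : 0 < Δ x := hpos' x hx hne
      have hd := ((hΔ'.differentiable (by norm_num)) x).hasDerivAt.sqrt hΔx.ne'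
      have : S1 x = deriv Δ x / (2 * Real.sqrt (Δ x)) := by simp [hS1def, hne]
      rw [this]
      exact hd
  have hderivS : ∀ x ∈ Set.Ioo (-ε) ε, deriv (fun y => Real.sqrt (Δ y)) x = S1 x :=
    fun x hx => (hS1 x hx).deriv
  -- second derivative
  have hS2 : ∀ x ∈ Set.Ioo (-ε) ε, HasDerivAt S1 (S2 x) x := by
    intro x hx
    rcases eq_or_ne x 0 with rfl | hne
    · have h20 : S2 0 = 2 * s := by simp [hS2def]
      have h10 : S1 0 = 0 := by simp [hS1def]
      rw [h20, hasDerivAt_iff_tendsto_slope]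
      have heq : ∀ᶠ y in 𝓝[≠] (0:ℝ),
          (deriv Δ y / y^3) / (2 * Real.sqrt (Δ y / y^4)) = slope S1 0 y := by
        filter_upwards [self_mem_nhdsWithin] with y hy
        have hy' : y ≠ 0 := hy
        have hS1y : S1 y = deriv Δ y / (2 * Real.sqrt (Δ y)) := by simp [hS1def, hy']
        rw [slope_def_field, h10, sub_zero, sub_zero, hS1y, hsqrt_eq y hy']
        generalize Real.sqrt (Δ y / y^4) = q
        rcases eq_or_ne q 0 with rfl | hz
        · simp
        · field_simp
          try simp
          try tauto
      have hlim : Tendsto (fun y => (deriv Δ y / y^3) / (2 * Real.sqrt (Δ y / y^4)))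
          (𝓝[≠] (0:ℝ)) (𝓝 (4*s^2 / (2 * s))) := T1.div (hq.const_mul 2) (mul_pos two_pos hs).ne'
      have hval : 4*s^2 / (2 * s) = 2 * s := by
        field_simp [hs.ne']
        ring
      rw [hval] at hlim
      exact hlim.congr' heq
    · have hΔx : 0 < Δ x := hpos' x hx hne
      have hr : 0 < Real.sqrt (Δ x) := Real.sqrt_pos.2 hΔx
      have hnum : HasDerivAt (deriv Δ) (iteratedDeriv 2 Δ x) x := by
        have := ((hdk 1).differentiable (by norm_num) x).hasDerivAt
        rwa [hder 1, iteratedDeriv_one] at this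
      have hsq : HasDerivAt (fun y => Real.sqrt (Δ y))
          (deriv Δ x / (2 * Real.sqrt (Δ x))) x :=
        ((hΔ'.differentiable (by norm_num)) x).hasDerivAt.sqrt hΔx.ne'
      have hden : HasDerivAt (fun y => 2 * Real.sqrt (Δ y))
          (2 * (deriv Δ x / (2 * Real.sqrt (Δ x)))) x := hsq.const_mul 2
      have hdiv := hnum.div hden (by simpa using (mul_pos two_pos hr).ne')
      have hEq : S1 =ᶠ[𝓝 x] fun y => deriv Δ y / (2 * Real.sqrt (Δ y)) := by
        filter_upwards [compl_singleton_mem_nhds hne] with y hy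
        have hy' : y ≠ 0 := hy
        simp [hS1def, hy']
      have hdiv2 : HasDerivAt S1
          ((iteratedDeriv 2 Δ x * (2 * Real.sqrt (Δ x)) -
            deriv Δ x * (2 * (deriv Δ x / (2 * Real.sqrt (Δ x))))) /
              (2 * Real.sqrt (Δ x)) ^ 2) x := hdiv.congr_of_eventuallyEq hEq
      convert hdiv2 using 1
      have hS2x : S2 x = iteratedDeriv 2 Δ x / (2 * Real.sqrt (Δ x)) -
          (deriv Δ x)^2 / (4 * Δ x * Real.sqrt (Δ x)) := by simp [hS2def, hne]
      rw [hS2x]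
      obtain ⟨r, hr0, hrr⟩ : ∃ r : ℝ, 0 < r ∧ Δ x = r^2 :=
        ⟨Real.sqrt (Δ x), hr, (Real.sq_sqrt hΔx.le).symm⟩
      rw [hrr, Real.sqrt_sq hr0.le]
      field_simp
      ring
  have hderivS1 : ∀ x ∈ Set.Ioo (-ε) ε, deriv S1 x = S2 x := fun x hx => (hS2 x hx).deriv
  -- continuity of S2
  have hS2c : ContinuousOn S2 (Set.Ioo (-ε) ε) := by
    intro x hx
    rcases eq_or_ne x 0 with rfl | hne
    · apply ContinuousAt.continuousWithinAt
      rw [ContinuousAt, ← nhdsNE_sup_pure (0:ℝ), tendsto_sup]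
      have h20 : S2 0 = 2 * s := by simp [hS2def]
      rw [h20]
      refine ⟨?_, by rw [← h20]; exact tendsto_pure_nhds S2 0⟩
      have heq : ∀ᶠ y in 𝓝[≠] (0:ℝ),
          (iteratedDeriv 2 Δ y / y^2) / (2 * Real.sqrt (Δ y / y^4)) -
            (deriv Δ y / y^3)^2 / ((4 * (Δ y / y^4)) * Real.sqrt (Δ y / y^4)) = S2 y := by
        filter_upwards [self_mem_nhdsWithin, hposev] with y hy hΔy
        have hy' : y ≠ 0 := hy
        have hS2y : S2 y = iteratedDeriv 2 Δ y / (2 * Real.sqrt (Δ y)) -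
            (deriv Δ y)^2 / (4 * Δ y * Real.sqrt (Δ y)) := by simp [hS2def, hy']
        rw [hS2y, hsqrt_eq y hy']
        have hq0 : (0:ℝ) < Real.sqrt (Δ y / y^4) :=
          Real.sqrt_pos.2 (div_pos hΔy (hp4 y hy'))
        generalize hgen : Real.sqrt (Δ y / y^4) = q at hq0 ⊢
        have hΔ0 : Δ y ≠ 0 := hΔy.ne'
        field_simp
      have hlim : Tendsto (fun y =>
          (iteratedDeriv 2 Δ y / y^2) / (2 * Real.sqrt (Δ y / y^4)) -
            (deriv Δ y / y^3)^2 / ((4 * (Δ y / y^4)) * Real.sqrt (Δ y / y^4)))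
          (𝓝[≠] (0:ℝ)) (𝓝 (12*s^2 / (2*s) - (4*s^2)^2 / ((4*s^2) * s))) :=
        (T2.div (hq.const_mul 2) (mul_pos two_pos hs).ne').sub
          ((T1.pow 2).div ((T0.const_mul 4).mul hq)
            (mul_pos (mul_pos (by norm_num : (0:ℝ) < 4) (pow_pos hs 2)) hs).ne')
      have hval : 12*s^2 / (2*s) - (4*s^2)^2 / ((4*s^2) * s) = 2 * s := by
        field_simp [hs.ne']
        ring
      rw [hval] at hlim
      exact hlim.congr' heq
    · have hΔx : 0 < Δ x := hpos' x hx hne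
      have hr : 0 < Real.sqrt (Δ x) := Real.sqrt_pos.2 hΔx
      have hcs : Continuous (fun y => Real.sqrt (Δ y)) :=
        Real.continuous_sqrt.comp hΔ'.continuous
      have hc2 : ContinuousAt (fun y => iteratedDeriv 2 Δ y / (2 * Real.sqrt (Δ y)) -
          (deriv Δ y)^2 / (4 * Δ y * Real.sqrt (Δ y))) x := by
        refine ContinuousAt.sub ?_ ?_
        · exact ((hdk 2).continuous.continuousAt).div
            ((hcs.continuousAt).const_mul 2) (by simpa using (mul_pos two_pos hr).ne')
        · exact (hcd1.continuousAt.pow 2).div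
            (((hΔ'.continuous.continuousAt.const_mul 4)).mul hcs.continuousAt)
            (by simpa using (mul_pos (mul_pos (by norm_num : (0:ℝ) < 4) hΔx) hr).ne')
      have hEq : (fun y => iteratedDeriv 2 Δ y / (2 * Real.sqrt (Δ y)) -
          (deriv Δ y)^2 / (4 * Δ y * Real.sqrt (Δ y))) =ᶠ[𝓝 x] S2 := by
        filter_upwards [compl_singleton_mem_nhds hne] with y hy
        have hy' : y ≠ 0 := hy
        simp [hS2def, hy']
      exact (hc2.congr hEq).continuousWithinAt
  -- assembly
  refine ⟨ε, hε, ?_, by rw [h0]; exact Real.sqrt_zero, ?_, ?_⟩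
  · have h21 : (2 : WithTop ℕ∞) = 1 + 1 := by norm_num
    rw [h21, contDiffOn_succ_iff_deriv_of_isOpen isOpen_Ioo]
    refine ⟨fun x hx => (hS1 x hx).differentiableAt.differentiableWithinAt,
      fun h => absurd h (by norm_num), ?_⟩
    have hC1 : ContDiffOn ℝ 1 S1 (Set.Ioo (-ε) ε) := by
      have h10 : (1 : WithTop ℕ∞) = 0 + 1 := by norm_num
      rw [h10, contDiffOn_succ_iff_deriv_of_isOpen isOpen_Ioo]
      refine ⟨fun x hx => (hS2 x hx).differentiableAt.differentiableWithinAt,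
        fun h => absurd h (by norm_num), ?_⟩
      rw [contDiffOn_zero]
      exact hS2c.congr hderivS1
    exact hC1.congr hderivS
  · have := hderivS 0 h0I
    rw [this]; simp [hS1def]
  · have he : deriv (fun y => Real.sqrt (Δ y)) =ᶠ[𝓝 0] S1 := by
      filter_upwards [isOpen_Ioo.mem_nhds h0I] with x hx
      exact hderivS x hx
    rw [he.deriv_eq, hderivS1 0 h0I]; simp [hS2def]
end

section
/- Let L₊ and L₋ be self-adjoint Schrödinger operators on [0,ℓ] with Dirichlet boundary conditions, and suppose (u,v) with u,v ∈ H²(0,ℓ)∩H¹₀(0,ℓ), both nonzero, satisfies the coupled system -L₋v = λu and L₊u = λv for some real λ > 0. If L₋ is a nonnegative operator and u ∈ ran(L₋) \ {0}, then ⟨u, v⟩ < 0. -/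
open RealInnerProductSpace

/-- If `-L₋v = λu`, `L₊u = λv` with `λ > 0`, `L₋` symmetric and
nonnegative, and `u ∈ ran(L₋) \ {0}`, then `⟨u, v⟩ < 0`. -/
theorem stmt11 {H : Type*} [NormedAddCommGroup H] [InnerProductSpace ℝ H]
    (Lm Lp : H →ₗ[ℝ] H) (u v : H) (lam : ℝ) (hlam : 0 < lam)
    (hsym : ∀ x y : H, ⟪Lm x, y⟫ = ⟪x, Lm y⟫)
    (hnonneg : ∀ x : H, 0 ≤ ⟪Lm x, x⟫)
    (h1 : -(Lm v) = lam • u) (h2 : Lp u = lam • v)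
    (hu0 : u ≠ 0) (hv0 : v ≠ 0)
    (hur : u ∈ LinearMap.range Lm) :
    ⟪u, v⟫ < 0 := by
  have hLv : Lm v = -(lam • u) := neg_eq_iff_eq_neg.mp h1
  have hq : ⟪Lm v, v⟫ = -(lam * ⟪u, v⟫) := by
    rw [hLv, inner_neg_left, real_inner_smul_left]
  have hle : ⟪u, v⟫ ≤ 0 := by
    have := hnonneg v
    nlinarith
  rcases lt_or_eq_of_le hle with h | h
  · exact h
  · -- ⟪u, v⟫ = 0, so ⟪Lm v, v⟫ = 0; show Lm v = 0, contradiction with u ≠ 0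
    exfalso
    have hqv : ⟪Lm v, v⟫ = 0 := by rw [hq, h]; ring
    have hb : ∀ w : H, ⟪Lm v, w⟫ = 0 := by
      intro w
      by_contra hbne
      set b := ⟪Lm v, w⟫ with hbdef
      set c := ⟪Lm w, w⟫ with hcdef
      have hc : 0 ≤ c := hnonneg w
      set t : ℝ := -b / (c + 1) with ht
      have hexp : 0 ≤ 2 * t * b + t ^ 2 * c := by
        have h0 := hnonneg (v + t • w)
        have : ⟪Lm (v + t • w), v + t • w⟫ = 2 * t * b + t ^ 2 * c := by
          have hwv : ⟪Lm w, v⟫ = b := by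
            rw [hsym w v, real_inner_comm]
          simp only [map_add, map_smul, inner_add_left, inner_add_right,
            real_inner_smul_left, real_inner_smul_right]
          rw [hqv, hwv]
          ring
        linarith [this ▸ h0]
      have hc1 : (0:ℝ) < c + 1 := by linarith
      have hb2 : 0 < b ^ 2 := by positivity
      rw [ht] at hexp
      have heq : 2 * (-b / (c + 1)) * b + (-b / (c + 1)) ^ 2 * c
          = (-2 * b ^ 2 * (c + 1) + b ^ 2 * c) / (c + 1) ^ 2 := by
        field_simp
      rw [heq] at hexp
      have hkey : 0 ≤ -2 * b ^ 2 * (c + 1) + b ^ 2 * c := by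
        have := mul_nonneg hexp (le_of_lt (pow_pos hc1 2))
        rwa [div_mul_cancel₀ _ (pow_ne_zero 2 hc1.ne')] at this
      nlinarith [mul_pos hb2 hc1]
    have hLv0 : Lm v = 0 := by
      have := hb (Lm v)
      exact inner_self_eq_zero.mp this
    have : lam • u = 0 := by rw [← h1, hLv0, neg_zero]
    exact hu0 (by simpa [hlam.ne'] using smul_eq_zero.mp this)
end

section
/- Let B(λ) and C(λ) be C^∞ real functions near λ = 0 with B(0) = Ḃ(0) = 0 and C(0) = Ċ(0) = C̈(0) = C⃛(0) = 0, and suppose α := (B̈(0))²/4 - C''''(0)/6 > 0. Then for all sufficiently small λ ≠ 0 the quadratic (in s) polynomial P(λ,s) = (s - s₀)² + B(λ)(s - s₀) + C(λ) has two distinct real roots s₊(λ) > s₋(λ), given by s±(λ) = s₀ + (-B(λ) ± √(B(λ)² - 4C(λ)))/2; both s±(λ) extend to C² functions of λ near 0 with s±(0) = s₀, s±'(0) = 0 and s±''(0) = (-B̈(0) ± 2√α)/2. -/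
open scoped ContDiff Topology
open MeasureTheory Set


open scoped ContDiff Topology
open MeasureTheory Set

namespace Stmt14Aux

noncomputable def J (k : ℕ) (h : ℝ → ℝ) : ℝ → ℝ :=
  fun x => ∫ t in (0:ℝ)..1, t ^ k * h (t * x)

lemma J_hasDerivAt {h : ℝ → ℝ} (hh : ContDiff ℝ ∞ h) (k : ℕ) (x₀ : ℝ) :
    HasDerivAt (J k h) (J (k+1) (deriv h) x₀) x₀ := by
  have hdh : Continuous (deriv h) := hh.continuous_deriv (by exact_mod_cast le_top)
  obtain ⟨M, hM⟩ := (isCompact_Icc (a := -(|x₀|+1)) (b := |x₀|+1)).exists_bound_of_continuousOn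
      hdh.continuousOn
  have key := intervalIntegral.hasDerivAt_integral_of_dominated_loc_of_deriv_le
      (F := fun x t => t ^ k * h (t * x)) (F' := fun x t => t ^ (k+1) * deriv h (t * x))
      (x₀ := x₀) (a := 0) (b := 1) (μ := volume) (bound := fun _ => M) (s := Metric.ball x₀ 1)
      (Metric.ball_mem_nhds x₀ one_pos)
      (Filter.Eventually.of_forall fun x =>
        ((continuous_pow k).mul (hh.continuous.comp (continuous_id.mul continuous_const))).aestronglyMeasurable)
      (((continuous_pow k).mul (hh.continuous.comp (continuous_id.mul continuous_const))).intervalIntegrable 0 1)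
      (((continuous_pow (k+1)).mul (hdh.comp (continuous_id.mul continuous_const))).aestronglyMeasurable)
      ?_ (intervalIntegrable_const) ?_
  · exact key.2
  · refine Filter.Eventually.of_forall fun t ht x hx => ?_
    have ht' : t ∈ Set.Ioc (0:ℝ) 1 := by simpa [Set.uIoc_of_le (zero_le_one)] using ht
    have hxb : |x| ≤ |x₀| + 1 := by
      have := mem_ball_iff_norm.mp hx
      calc |x| = |x₀ + (x - x₀)| := by ring_nf
        _ ≤ |x₀| + |x - x₀| := abs_add_le _ _
        _ ≤ |x₀| + 1 := by
            have : |x - x₀| ≤ 1 := le_of_lt (by simpa [Real.norm_eq_abs] using this)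
            linarith
    have htx : t * x ∈ Set.Icc (-(|x₀|+1)) (|x₀|+1) := by
      have : |t * x| ≤ |x₀| + 1 := by
        rw [abs_mul]
        calc |t| * |x| ≤ 1 * (|x₀|+1) := by
              apply mul_le_mul _ hxb (abs_nonneg _) zero_le_one
              rw [abs_of_pos ht'.1]; exact ht'.2
          _ = |x₀| + 1 := one_mul _
      exact abs_le.mp this
    have h1 : |t ^ (k+1)| ≤ 1 := by
      rw [abs_pow]
      apply pow_le_one₀ (abs_nonneg _)
      rw [abs_of_pos ht'.1]; exact ht'.2
    calc ‖t ^ (k+1) * deriv h (t * x)‖ = |t ^ (k+1)| * ‖deriv h (t * x)‖ := by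
          simp [Real.norm_eq_abs, abs_mul]
      _ ≤ 1 * M := mul_le_mul h1 (hM _ htx) (norm_nonneg _) zero_le_one
      _ = M := one_mul M
  · refine Filter.Eventually.of_forall fun t _ x _ => ?_
    have inner : HasDerivAt (fun y : ℝ => t * y) t x := by
      simpa using (hasDerivAt_id x).const_mul t
    have h1 : HasDerivAt (fun y => h (t * y)) (deriv h (t * x) * t) x :=
      ((hh.differentiable (by simp)) _).hasDerivAt.comp x inner
    have h2 := h1.const_mul (t ^ k)
    exact h2.congr_deriv (by ring)

lemma J_contDiff_nat (n : ℕ) : ∀ (k : ℕ) {h : ℝ → ℝ}, ContDiff ℝ ∞ h →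
    ContDiff ℝ (n : WithTop ℕ∞) (J k h) := by
  induction n with
  | zero =>
    intro k h hh
    rw [show ((0:ℕ) : WithTop ℕ∞) = 0 from rfl, contDiff_zero]
    have hd : Differentiable ℝ (J k h) := fun x => (J_hasDerivAt hh k x).differentiableAt
    exact hd.continuous
  | succ n ih =>
    intro k h hh
    have hdh : ContDiff ℝ ∞ (deriv h) := (contDiff_infty_iff_deriv.mp hh).2
    rw [show ((n+1:ℕ) : WithTop ℕ∞) = (n : WithTop ℕ∞) + 1 by push_cast; rfl,
      contDiff_succ_iff_deriv]
    refine ⟨fun x => (J_hasDerivAt hh k x).differentiableAt, by simp, ?_⟩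
    have : deriv (J k h) = J (k+1) (deriv h) := funext fun x => (J_hasDerivAt hh k x).deriv
    rw [this]
    exact ih (k+1) hdh

lemma J_contDiff_inf {h : ℝ → ℝ} (hh : ContDiff ℝ ∞ h) (k : ℕ) :
    ContDiff ℝ ∞ (J k h) := by
  rw [contDiff_infty]
  exact fun n => J_contDiff_nat n k hh

/-- Hadamard division step. -/
lemma step {f : ℝ → ℝ} (hf : ContDiff ℝ ∞ f) (h0 : f 0 = 0) :
    ∃ g : ℝ → ℝ, ContDiff ℝ ∞ g ∧ (∀ x, f x = x * g x) ∧ g 0 = deriv f 0 := by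
  refine ⟨J 0 (deriv f), J_contDiff_inf (contDiff_infty_iff_deriv.mp hf).2 0, fun x => ?_, ?_⟩
  · have hdf : Continuous (deriv f) := hf.continuous_deriv (by exact_mod_cast le_top)
    have h1 : x * J 0 (deriv f) x = ∫ t in (0:ℝ)..1, x * deriv f (t * x) := by
      rw [J, ← intervalIntegral.integral_const_mul]
      simp [pow_zero, one_mul]
    have h2 : (∫ t in (0:ℝ)..1, x * deriv f (t * x)) = ∫ u in (0:ℝ)..(x:ℝ), deriv f u := by
      have := intervalIntegral.integral_comp_smul_deriv
        (f := fun t : ℝ => t * x) (f' := fun _ : ℝ => x) (g := deriv f) (a := 0) (b := 1)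
        (fun t _ => by simpa using (hasDerivAt_id t).mul_const x)
        (continuousOn_const) hdf
      simpa [smul_eq_mul, mul_comm] using this
    have h3 : (∫ u in (0:ℝ)..x, deriv f u) = f x - f 0 :=
      intervalIntegral.integral_deriv_eq_sub
        (fun u _ => hf.differentiable (by simp) u)
        (hdf.intervalIntegrable 0 x)
    rw [h1, h2, h3, h0, sub_zero]
  · simp [J, intervalIntegral.integral_const]

lemma itadd {f g : ℝ → ℝ} (hf : ContDiff ℝ ∞ f) (hg : ContDiff ℝ ∞ g) (n : ℕ) (x : ℝ) :
    iteratedDeriv n (fun y => f y + g y) x = iteratedDeriv n f x + iteratedDeriv n g x := by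
  simp only [← iteratedDerivWithin_univ]
  exact iteratedDerivWithin_add (Set.mem_univ x) uniqueDiffOn_univ
    ((contDiff_infty.mp hf n).contDiffWithinAt)
    ((contDiff_infty.mp hg n).contDiffWithinAt)

lemma deriv_id_mul {h : ℝ → ℝ} (hh : ContDiff ℝ ∞ h) :
    deriv (fun x => x * h x) = fun x => h x + x * deriv h x := by
  funext x
  have := (hasDerivAt_id x).mul ((hh.differentiable (by simp)) x).hasDerivAt
  exact this.deriv.trans (by simp)

lemma Qlem : ∀ (n : ℕ) (h : ℝ → ℝ), ContDiff ℝ ∞ h →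
    iteratedDeriv (n+1) (fun x => x * h x) 0 = (n+1 : ℝ) * iteratedDeriv n h 0 := by
  intro n
  induction n with
  | zero =>
    intro h hh
    rw [iteratedDeriv_one, deriv_id_mul hh]
    simp
  | succ n ih =>
    intro h hh
    have hdh : ContDiff ℝ ∞ (deriv h) := (contDiff_infty_iff_deriv.mp hh).2
    have hxdh : ContDiff ℝ ∞ (fun x => x * deriv h x) := contDiff_id.mul hdh
    rw [iteratedDeriv_succ' (n := n+1), deriv_id_mul hh]
    rw [itadd hh hxdh (n+1) 0, ih (deriv h) hdh, ← iteratedDeriv_succ']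
    push_cast
    ring

end Stmt14Aux




/-- roots of `P(λ,s) = (s-s₀)² + B(λ)(s-s₀) + C(λ)` near a
non-regular crossing.  Under the stated vanishing conditions and
`α = B̈(0)²/4 - C''''(0)/6 > 0`, for small nonzero `λ` the polynomial has two
distinct real roots `s±(λ) = s₀ + (-B(λ) ± √(B(λ)²-4C(λ)))/2`, which are `C²`
in `λ` near `0` with `s±(0) = s₀`, `s±'(0) = 0`, `s±''(0) = (-B̈(0) ± 2√α)/2`. -/
theorem stmt14 (s₀ : ℝ) (B C : ℝ → ℝ)
    (hB : ContDiff ℝ (⊤ : ℕ∞) B) (hC : ContDiff ℝ (⊤ : ℕ∞) C)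
    (hB0 : B 0 = 0) (hB1 : deriv B 0 = 0)
    (hC0 : C 0 = 0) (hC1 : deriv C 0 = 0)
    (hC2 : iteratedDeriv 2 C 0 = 0) (hC3 : iteratedDeriv 3 C 0 = 0)
    (α : ℝ) (hα : α = (iteratedDeriv 2 B 0)^2 / 4 - iteratedDeriv 4 C 0 / 6)
    (hαpos : 0 < α) :
    ∃ ε > (0:ℝ),
      (∀ lam : ℝ, lam ≠ 0 → |lam| < ε →
        0 < B lam ^ 2 - 4 * C lam ∧
        (s₀ + (-B lam - Real.sqrt (B lam ^ 2 - 4 * C lam)) / 2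
          < s₀ + (-B lam + Real.sqrt (B lam ^ 2 - 4 * C lam)) / 2) ∧
        ((s₀ + (-B lam + Real.sqrt (B lam ^ 2 - 4 * C lam)) / 2 - s₀)^2
          + B lam * (s₀ + (-B lam + Real.sqrt (B lam ^ 2 - 4 * C lam)) / 2 - s₀)
          + C lam = 0) ∧
        ((s₀ + (-B lam - Real.sqrt (B lam ^ 2 - 4 * C lam)) / 2 - s₀)^2
          + B lam * (s₀ + (-B lam - Real.sqrt (B lam ^ 2 - 4 * C lam)) / 2 - s₀)
          + C lam = 0)) ∧
      ContDiffOn ℝ 2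
        (fun lam => s₀ + (-B lam + Real.sqrt (B lam ^ 2 - 4 * C lam)) / 2)
        (Set.Ioo (-ε) ε) ∧
      ContDiffOn ℝ 2
        (fun lam => s₀ + (-B lam - Real.sqrt (B lam ^ 2 - 4 * C lam)) / 2)
        (Set.Ioo (-ε) ε) ∧
      s₀ + (-B 0 + Real.sqrt (B 0 ^ 2 - 4 * C 0)) / 2 = s₀ ∧
      s₀ + (-B 0 - Real.sqrt (B 0 ^ 2 - 4 * C 0)) / 2 = s₀ ∧
      deriv (fun lam => s₀ + (-B lam + Real.sqrt (B lam ^ 2 - 4 * C lam)) / 2) 0 = 0 ∧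
      deriv (fun lam => s₀ + (-B lam - Real.sqrt (B lam ^ 2 - 4 * C lam)) / 2) 0 = 0 ∧
      deriv (deriv (fun lam => s₀ + (-B lam + Real.sqrt (B lam ^ 2 - 4 * C lam)) / 2)) 0
        = (-(iteratedDeriv 2 B 0) + 2 * Real.sqrt α) / 2 ∧
      deriv (deriv (fun lam => s₀ + (-B lam - Real.sqrt (B lam ^ 2 - 4 * C lam)) / 2)) 0
        = (-(iteratedDeriv 2 B 0) - 2 * Real.sqrt α) / 2 := by
  have hB' : ContDiff ℝ ∞ B := hB.of_le (by simp)
  have hC' : ContDiff ℝ ∞ C := hC.of_le (by simp)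
  -- divide B by λ twice
  obtain ⟨b₁, hb₁, hBb₁, hb₁0⟩ := Stmt14Aux.step hB' hB0
  obtain ⟨b, hb, hb₁b, hb0⟩ := Stmt14Aux.step hb₁ (by rw [hb₁0, hB1])
  have hBfun : B = fun x => x * b₁ x := funext hBb₁
  have hb₁fun : b₁ = fun x => x * b x := funext hb₁b
  -- divide C by λ four times
  obtain ⟨c₁, hc₁, hCc₁, hc₁0⟩ := Stmt14Aux.step hC' hC0
  have hCfun : C = fun x => x * c₁ x := funext hCc₁
  obtain ⟨c₂, hc₂, hc₁c₂, hc₂0⟩ := Stmt14Aux.step hc₁ (by rw [hc₁0, hC1])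
  have hc₁fun : c₁ = fun x => x * c₂ x := funext hc₁c₂
  have hdc₁0 : deriv c₁ 0 = 0 := by
    have hq := Stmt14Aux.Qlem 1 c₁ hc₁
    rw [← hCfun, iteratedDeriv_one] at hq
    norm_num at hq
    rw [hC2] at hq
    linarith
  obtain ⟨c₃, hc₃, hc₂c₃, hc₃0⟩ := Stmt14Aux.step hc₂ (by rw [hc₂0, hdc₁0])
  have hc₂fun : c₂ = fun x => x * c₃ x := funext hc₂c₃
  have hdc₂0 : deriv c₂ 0 = 0 := by
    have hq3 := Stmt14Aux.Qlem 2 c₁ hc₁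
    rw [← hCfun] at hq3
    have hq2 := Stmt14Aux.Qlem 1 c₂ hc₂
    rw [← hc₁fun, iteratedDeriv_one] at hq2
    norm_num at hq3 hq2
    rw [hC3, hq2] at hq3
    linarith
  obtain ⟨c, hc, hc₃c, hc0⟩ := Stmt14Aux.step hc₃ (by rw [hc₃0, hdc₂0])
  -- key values
  have hb0v : b 0 = iteratedDeriv 2 B 0 / 2 := by
    have hq := Stmt14Aux.Qlem 1 b₁ hb₁
    rw [← hBfun, iteratedDeriv_one] at hq
    norm_num at hq
    rw [hq, hb0]; ring
  have hc0v : c 0 = iteratedDeriv 4 C 0 / 24 := by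
    have hq4 := Stmt14Aux.Qlem 3 c₁ hc₁
    rw [← hCfun] at hq4
    have hq3 := Stmt14Aux.Qlem 2 c₂ hc₂
    rw [← hc₁fun] at hq3
    have hq2 := Stmt14Aux.Qlem 1 c₃ hc₃
    rw [← hc₂fun, iteratedDeriv_one] at hq2
    norm_num at hq4 hq3 hq2
    rw [hq4, hq3, hq2, hc0]; ring
  -- the divided discriminant
  set g : ℝ → ℝ := fun x => b x * b x - 4 * c x with hgdef
  have hg : ContDiff ℝ ∞ g := (hb.mul hb).sub (contDiff_const.mul hc)
  have hg0 : g 0 = α := by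
    simp only [hgdef]
    rw [hb0v, hc0v, hα]; ring
  have hBx : ∀ x, B x = x^2 * b x := by
    intro x; rw [hBb₁ x, hb₁b x]; ring
  have hCx : ∀ x, C x = x^4 * c x := by
    intro x; rw [hCc₁ x, hc₁c₂ x, hc₂c₃ x, hc₃c x]; ring
  have hD : ∀ x, B x ^ 2 - 4 * C x = x^4 * g x := by
    intro x; rw [hBx x, hCx x]; simp only [hgdef]; ring
  -- choose ε
  have hev : ∀ᶠ x in 𝓝 (0:ℝ), 0 < g x :=
    hg.continuous.continuousAt.preimage_mem_nhds (isOpen_Ioi.mem_nhds (by rw [hg0]; exact hαpos))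
  obtain ⟨ε, hε, hball⟩ := Metric.eventually_nhds_iff.mp hev
  have hgpos : ∀ x : ℝ, |x| < ε → 0 < g x := by
    intro x hx
    exact hball (by simpa [Real.dist_eq] using hx)
  -- rewrite sqrt of discriminant
  have hsqrtEq : ∀ x : ℝ, Real.sqrt (B x ^ 2 - 4 * C x) = x^2 * Real.sqrt (g x) := by
    intro x
    rw [hD x, show x^4 * g x = (x^2)^2 * g x by ring, Real.sqrt_mul (sq_nonneg _),
      Real.sqrt_sq (sq_nonneg x)]
  have hfunP : (fun lam => s₀ + (-B lam + Real.sqrt (B lam ^ 2 - 4 * C lam)) / 2)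
      = fun x => s₀ + (-B x + x^2 * Real.sqrt (g x)) / 2 := by
    funext x; rw [hsqrtEq x]
  have hfunM : (fun lam => s₀ + (-B lam - Real.sqrt (B lam ^ 2 - 4 * C lam)) / 2)
      = fun x => s₀ + (-B x - x^2 * Real.sqrt (g x)) / 2 := by
    funext x; rw [hsqrtEq x]
  -- list of facts about sqrt∘g near 0
  set h : ℝ → ℝ := fun x => Real.sqrt (g x) with hhdef
  have hS0 : Set.Ioo (-ε) ε ∈ 𝓝 (0:ℝ) :=
    isOpen_Ioo.mem_nhds ⟨neg_lt_zero.mpr hε, hε⟩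
  have hhC : ∀ x ∈ Set.Ioo (-ε) ε, ContDiffAt ℝ ∞ h x := by
    intro x hx
    exact (hg.contDiffAt).sqrt (ne_of_gt (hgpos x (abs_lt.mpr ⟨hx.1, hx.2⟩)))
  have hgne : g 0 ≠ 0 := by rw [hg0]; exact ne_of_gt hαpos
  refine ⟨ε, hε, ?_, ?_, ?_, ?_, ?_, ?_, ?_, ?_, ?_⟩
  · -- pointwise facts
    intro lam hne hlt
    have hΔ : 0 < B lam ^ 2 - 4 * C lam := by
      rw [hD lam]
      exact mul_pos (by positivity) (hgpos lam hlt)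
    have hr : 0 < Real.sqrt (B lam ^ 2 - 4 * C lam) := Real.sqrt_pos.mpr hΔ
    have hsq : Real.sqrt (B lam ^ 2 - 4 * C lam) ^ 2 = B lam ^ 2 - 4 * C lam :=
      Real.sq_sqrt hΔ.le
    refine ⟨hΔ, by linarith, by linear_combination hsq / 4, by linear_combination hsq / 4⟩
  · -- C² of s₊
    rw [hfunP]
    refine contDiffOn_const.add (ContDiffOn.div_const ?_ 2)
    refine ((hB.of_le (by exact_mod_cast ENat.natCast_le_of_coe_top_le_withTop le_rfl 2)).contDiffOn.neg).add ?_
    refine ((contDiff_id.pow 2).contDiffOn).mul ?_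
    intro x hx
    exact ((hhC x hx).of_le
      (by exact_mod_cast ENat.natCast_le_of_coe_top_le_withTop le_rfl 2)).contDiffWithinAt
  · -- C² of s₋
    rw [hfunM]
    refine contDiffOn_const.add (ContDiffOn.div_const ?_ 2)
    refine ((hB.of_le (by exact_mod_cast ENat.natCast_le_of_coe_top_le_withTop le_rfl 2)).contDiffOn.neg).sub ?_
    refine ((contDiff_id.pow 2).contDiffOn).mul ?_
    intro x hx
    exact ((hhC x hx).of_le
      (by exact_mod_cast ENat.natCast_le_of_coe_top_le_withTop le_rfl 2)).contDiffWithinAt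
  · simp [hB0, hC0]
  · simp [hB0, hC0]
  · -- deriv s₊ at 0
    rw [hfunP]
    have hh0 : HasDerivAt h (deriv h 0) 0 :=
      (((hhC 0 ⟨neg_lt_zero.mpr hε, hε⟩).of_le le_rfl).differentiableAt
        (by simp)).hasDerivAt
    have hq : HasDerivAt (fun x : ℝ => x^2 * h x) 0 0 := by
      have := (hasDerivAt_pow 2 (0:ℝ)).mul hh0
      exact this.congr_deriv (by simp)
    have hBd : HasDerivAt B (deriv B 0) 0 :=
      (hB'.differentiable (by simp) 0).hasDerivAt
    have := ((hBd.neg.add hq).div_const 2).const_add s₀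
    have hd : deriv (fun x => s₀ + (-B x + x^2 * h x) / 2) 0 = _ := this.deriv
    rw [hd, hB1]; ring
  · -- deriv s₋ at 0
    rw [hfunM]
    have hh0 : HasDerivAt h (deriv h 0) 0 :=
      (((hhC 0 ⟨neg_lt_zero.mpr hε, hε⟩).of_le le_rfl).differentiableAt
        (by simp)).hasDerivAt
    have hq : HasDerivAt (fun x : ℝ => x^2 * h x) 0 0 := by
      have := (hasDerivAt_pow 2 (0:ℝ)).mul hh0
      exact this.congr_deriv (by simp)
    have hBd : HasDerivAt B (deriv B 0) 0 :=
      (hB'.differentiable (by simp) 0).hasDerivAt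
    have := ((hBd.neg.sub hq).div_const 2).const_add s₀
    have hd : deriv (fun x => s₀ + (-B x - x^2 * h x) / 2) 0 = _ := this.deriv
    rw [hd, hB1]; ring
  · -- second deriv s₊
    rw [hfunP]
    have le1 : (1 : WithTop ℕ∞) ≤ ∞ := by
      exact_mod_cast ENat.natCast_le_of_coe_top_le_withTop le_rfl 1
    have le2 : (1 : WithTop ℕ∞) + 1 ≤ ∞ := by
      exact_mod_cast ENat.natCast_le_of_coe_top_le_withTop le_rfl 2
    have h0mem : (0:ℝ) ∈ Set.Ioo (-ε) ε := ⟨neg_lt_zero.mpr hε, hε⟩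
    have hderiv : ∀ x ∈ Set.Ioo (-ε) ε,
        deriv (fun x => s₀ + (-B x + x^2 * h x) / 2) x
          = (-deriv B x + (2*x*h x + x^2 * deriv h x)) / 2 := by
      intro x hx
      have hq : HasDerivAt (fun y : ℝ => y^2 * h y) (2*x*h x + x^2*deriv h x) x := by
        have := (hasDerivAt_pow 2 x).mul
          ((hhC x hx).differentiableAt (by simp)).hasDerivAt
        exact this.congr_deriv (by push_cast; ring)
      have hBd : HasDerivAt B (deriv B x) x :=
        (hB'.differentiable (by simp) x).hasDerivAt
      exact (((hBd.neg.add hq).div_const 2).const_add s₀).deriv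
    have hEv : deriv (fun x => s₀ + (-B x + x^2 * h x)/2)
        =ᶠ[𝓝 (0:ℝ)] (fun x => (-deriv B x + (2*x*h x + x^2 * deriv h x))/2) :=
      Filter.eventuallyEq_of_mem hS0 hderiv
    rw [hEv.deriv_eq]
    have hh0 : HasDerivAt h (deriv h 0) 0 :=
      ((hhC 0 h0mem).differentiableAt (by simp)).hasDerivAt
    have hd2B : HasDerivAt (deriv B) (deriv (deriv B) 0) 0 :=
      (((contDiff_infty_iff_deriv.mp hB').2).differentiable (by simp) 0).hasDerivAt
    have ht2 : HasDerivAt (fun x : ℝ => 2*x*h x) (2 * h 0) 0 := by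
      have := ((hasDerivAt_id (0:ℝ)).const_mul 2).mul hh0
      exact this.congr_deriv (by simp)
    have hdh0 : DifferentiableAt ℝ (deriv h) 0 := by
      have hhS : ContDiffOn ℝ ∞ h (Set.Ioo (-ε) ε) :=
        fun x hx => (hhC x hx).contDiffWithinAt
      have := (hhS.deriv_of_isOpen isOpen_Ioo le2).differentiableOn one_ne_zero
      exact this.differentiableAt hS0
    have ht3 : HasDerivAt (fun x : ℝ => x^2 * deriv h x) 0 0 := by
      have := (hasDerivAt_pow 2 (0:ℝ)).mul hdh0.hasDerivAt
      exact this.congr_deriv (by simp)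
    have hG := (hd2B.neg.add (ht2.add ht3)).div_const 2
    have hGd : deriv (fun x => (-deriv B x + (2*x*h x + x^2 * deriv h x)) / 2) 0 = _ := hG.deriv
    rw [hGd]
    have e2 : deriv (deriv B) 0 = iteratedDeriv 2 B 0 := by
      rw [iteratedDeriv_succ, iteratedDeriv_one]
    have eh0 : h 0 = Real.sqrt α := by rw [hhdef]; simp only []; rw [hg0]
    rw [e2, eh0]; ring
  · -- second deriv s₋
    rw [hfunM]
    have le1 : (1 : WithTop ℕ∞) ≤ ∞ := by
      exact_mod_cast ENat.natCast_le_of_coe_top_le_withTop le_rfl 1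
    have le2 : (1 : WithTop ℕ∞) + 1 ≤ ∞ := by
      exact_mod_cast ENat.natCast_le_of_coe_top_le_withTop le_rfl 2
    have h0mem : (0:ℝ) ∈ Set.Ioo (-ε) ε := ⟨neg_lt_zero.mpr hε, hε⟩
    have hderiv : ∀ x ∈ Set.Ioo (-ε) ε,
        deriv (fun x => s₀ + (-B x - x^2 * h x) / 2) x
          = (-deriv B x - (2*x*h x + x^2 * deriv h x)) / 2 := by
      intro x hx
      have hq : HasDerivAt (fun y : ℝ => y^2 * h y) (2*x*h x + x^2*deriv h x) x := by
        have := (hasDerivAt_pow 2 x).mul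
          ((hhC x hx).differentiableAt (by simp)).hasDerivAt
        exact this.congr_deriv (by push_cast; ring)
      have hBd : HasDerivAt B (deriv B x) x :=
        (hB'.differentiable (by simp) x).hasDerivAt
      exact (((hBd.neg.sub hq).div_const 2).const_add s₀).deriv
    have hEv : deriv (fun x => s₀ + (-B x - x^2 * h x)/2)
        =ᶠ[𝓝 (0:ℝ)] (fun x => (-deriv B x - (2*x*h x + x^2 * deriv h x))/2) :=
      Filter.eventuallyEq_of_mem hS0 hderiv
    rw [hEv.deriv_eq]
    have hh0 : HasDerivAt h (deriv h 0) 0 :=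
      ((hhC 0 h0mem).differentiableAt (by simp)).hasDerivAt
    have hd2B : HasDerivAt (deriv B) (deriv (deriv B) 0) 0 :=
      (((contDiff_infty_iff_deriv.mp hB').2).differentiable (by simp) 0).hasDerivAt
    have ht2 : HasDerivAt (fun x : ℝ => 2*x*h x) (2 * h 0) 0 := by
      have := ((hasDerivAt_id (0:ℝ)).const_mul 2).mul hh0
      exact this.congr_deriv (by simp)
    have hdh0 : DifferentiableAt ℝ (deriv h) 0 := by
      have hhS : ContDiffOn ℝ ∞ h (Set.Ioo (-ε) ε) :=
        fun x hx => (hhC x hx).contDiffWithinAt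
      have := (hhS.deriv_of_isOpen isOpen_Ioo le2).differentiableOn one_ne_zero
      exact this.differentiableAt hS0
    have ht3 : HasDerivAt (fun x : ℝ => x^2 * deriv h x) 0 0 := by
      have := (hasDerivAt_pow 2 (0:ℝ)).mul hdh0.hasDerivAt
      exact this.congr_deriv (by simp)
    have hG := (hd2B.neg.sub (ht2.add ht3)).div_const 2
    have hGd : deriv (fun x => (-deriv B x - (2*x*h x + x^2 * deriv h x)) / 2) 0 = _ := hG.deriv
    rw [hGd]
    have e2 : deriv (deriv B) 0 = iteratedDeriv 2 B 0 := by
      rw [iteratedDeriv_succ, iteratedDeriv_one]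
    have eh0 : h 0 = Real.sqrt α := by rw [hhdef]; simp only []; rw [hg0]
    rw [e2, eh0]; ring
end
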